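/- arXiv:2411.00022 — 2 statements merged into one kernel-verified Lean document; each statement's English description precedes it below -/
import Mathlib

section
/- Let A be an n×n complex matrix with k = Ind(A) and let m be a positive integer. Then R(A^{w_m,†}) = R(A^k) and N(A^{w_m,†}) = N((A^k)^* A^{m+1} A^†). -/
open Matrix

/-- `X` is the Moore–Penrose inverse of `A`. -/
def IsMoorePenrose {p q : ℕ} (A : Matrix (Fin p) (Fin q) ℂ)
    (X : Matrix (Fin q) (Fin p) ℂ) : Prop :=
  A * X * A = A ∧ X * A * X = X ∧ (A * X)ᴴ = A * X ∧ (X * A)ᴴ = X * A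

/-- `k` is the index of `A`: the smallest nonnegative integer `j` with
`rank (A ^ (j+1)) = rank (A ^ j)`. -/
def HasIndex {n : ℕ} (A : Matrix (Fin n) (Fin n) ℂ) (k : ℕ) : Prop :=
  (A ^ (k + 1)).rank = (A ^ k).rank ∧ ∀ j < k, (A ^ (j + 1)).rank ≠ (A ^ j).rank

/-- `X` is the core-EP inverse of `A` (with `k = Ind A`). -/
def IsCoreEP {n : ℕ} (A : Matrix (Fin n) (Fin n) ℂ) (k : ℕ)
    (X : Matrix (Fin n) (Fin n) ℂ) : Prop :=
  X * A ^ (k + 1) = A ^ k ∧ A * X ^ 2 = X ∧ (A * X)ᴴ = A * X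

/-- `X` is the Drazin inverse of `A` (with `k = Ind A`). -/
def IsDrazin {n : ℕ} (A : Matrix (Fin n) (Fin n) ℂ) (k : ℕ)
    (X : Matrix (Fin n) (Fin n) ℂ) : Prop :=
  X * A * X = X ∧ A * X = X * A ∧ X * A ^ (k + 1) = A ^ k

private lemma matrix_eq_of_mulVec {n : ℕ} {M N : Matrix (Fin n) (Fin n) ℂ}
    (h : ∀ v, M *ᵥ v = N *ᵥ v) : M = N := by
  ext i j
  have := congrFun (h (Pi.single j 1)) i
  simpa using this

private lemma range_mul_le {n : ℕ} (M N : Matrix (Fin n) (Fin n) ℂ) :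
    LinearMap.range (M * N).mulVecLin ≤ LinearMap.range M.mulVecLin := by
  rw [Matrix.mulVecLin_mul]
  exact LinearMap.range_comp_le_range _ _

private lemma ker_mul_ge {n : ℕ} (M N : Matrix (Fin n) (Fin n) ℂ) :
    LinearMap.ker N.mulVecLin ≤ LinearMap.ker (M * N).mulVecLin := by
  rw [Matrix.mulVecLin_mul]
  exact LinearMap.ker_le_ker_comp _ _

/-- `R(A^{w_m,†}) = R(A^k)` and `N(A^{w_m,†}) = N((A^k)^* A^{m+1} A^†)`. -/
theorem m_WGMP_inverse_range_and_null {n k m : ℕ}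
    (A AEP Adag : Matrix (Fin n) (Fin n) ℂ)
    (hk : HasIndex A k) (hm : 0 < m)
    (hEP : IsCoreEP A k AEP)
    (hdag : IsMoorePenrose A Adag) :
    LinearMap.range ((AEP ^ (m + 1) * A ^ m) * A * Adag).mulVecLin
      = LinearMap.range (A ^ k).mulVecLin ∧
    LinearMap.ker ((AEP ^ (m + 1) * A ^ m) * A * Adag).mulVecLin
      = LinearMap.ker ((A ^ k)ᴴ * A ^ (m + 1) * Adag).mulVecLin := by
  obtain ⟨h1, h2, h3⟩ := hEP
  have hAA : A * Adag * A = A := hdag.1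
  -- L1 : AEP ^ j * A ^ (k + j) = A ^ k
  have L1 : ∀ j, AEP ^ j * A ^ (k + j) = A ^ k := by
    intro j
    induction j with
    | zero => simp
    | succ j ih =>
      calc AEP ^ (j + 1) * A ^ (k + (j + 1))
          = AEP ^ j * (AEP * A ^ (k + 1)) * A ^ j := by
            rw [pow_succ AEP, show k + (j + 1) = (k + 1) + j by ring, pow_add]
            simp only [mul_assoc]
        _ = AEP ^ j * A ^ (k + j) := by rw [h1, mul_assoc, ← pow_add]
        _ = A ^ k := ih
  -- L2 : A ^ j * AEP ^ (j + 1) = AEP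
  have L2 : ∀ j, A ^ j * AEP ^ (j + 1) = AEP := by
    intro j
    induction j with
    | zero => simp
    | succ j ih =>
      calc A ^ (j + 1) * AEP ^ (j + 2)
          = A ^ j * (A * AEP ^ 2) * AEP ^ j := by
            rw [pow_succ A, show j + 2 = 2 + j by ring, pow_add]
            simp only [mul_assoc]
        _ = A ^ j * AEP ^ (j + 1) := by rw [h2, mul_assoc, ← pow_succ']
        _ = AEP := ih
  -- outer inverse property
  have houter : AEP * A * AEP = AEP := by
    calc AEP * A * AEP = AEP * A * (A ^ k * AEP ^ (k + 1)) := by rw [L2 k]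
      _ = AEP * A ^ (k + 1) * AEP ^ (k + 1) := by
          rw [mul_assoc, ← mul_assoc A, ← pow_succ', mul_assoc]
      _ = A ^ k * AEP ^ (k + 1) := by rw [h1]
      _ = AEP := L2 k
  -- X * A^(k+1) = A^k
  have hXA : (AEP ^ (m + 1) * A ^ m) * A * Adag * A ^ (k + 1) = A ^ k := by
    have e0 : A ^ m * (A * A ^ k) = A ^ (k + (m + 1)) := by
      rw [show k + (m + 1) = m + (1 + k) by ring, pow_add, pow_add, pow_one]
    calc (AEP ^ (m + 1) * A ^ m) * A * Adag * A ^ (k + 1)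
        = AEP ^ (m + 1) * (A ^ m * ((A * Adag * A) * A ^ k)) := by
          rw [pow_succ' A k]
          simp only [mul_assoc]
      _ = AEP ^ (m + 1) * A ^ (k + (m + 1)) := by rw [hAA, ← e0]
      _ = A ^ k := L1 (m + 1)
  -- X = A^k * Z
  have hfacEP : AEP ^ (m + 1) = A ^ k * AEP ^ (k + 1 + m) := by
    calc AEP ^ (m + 1) = AEP * AEP ^ m := pow_succ' AEP m
      _ = A ^ k * AEP ^ (k + 1) * AEP ^ m := by rw [L2 k]
      _ = A ^ k * AEP ^ (k + 1 + m) := by rw [mul_assoc, ← pow_add]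
  have hXfac : (AEP ^ (m + 1) * A ^ m) * A * Adag
      = A ^ k * (AEP ^ (k + 1 + m) * A ^ m * A * Adag) := by
    rw [hfacEP]
    simp only [mul_assoc]
  -- A * AEP * A^k = A^k  (needs the index hypothesis)
  have hrange : LinearMap.range (A ^ (k + 1)).mulVecLin
      = LinearMap.range (A ^ k).mulVecLin := by
    apply Submodule.eq_of_le_of_finrank_eq
    · rw [pow_succ]
      exact range_mul_le _ _
    · exact hk.1
  have hPA : A * AEP * A ^ (k + 1) = A ^ (k + 1) := by
    rw [mul_assoc, h1, ← pow_succ']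
  have hP : A * AEP * A ^ k = A ^ k := by
    apply matrix_eq_of_mulVec
    intro v
    have hv : (A ^ k) *ᵥ v ∈ LinearMap.range (A ^ (k + 1)).mulVecLin := by
      rw [hrange]
      exact ⟨v, rfl⟩
    obtain ⟨w, hw⟩ := hv
    simp only [mulVecLin_apply] at hw
    calc (A * AEP * A ^ k) *ᵥ v = (A * AEP) *ᵥ ((A ^ k) *ᵥ v) := by
          rw [mulVec_mulVec]
      _ = (A * AEP) *ᵥ ((A ^ (k + 1)) *ᵥ w) := by rw [hw]
      _ = (A * AEP * A ^ (k + 1)) *ᵥ w := by rw [mulVec_mulVec]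
      _ = (A ^ (k + 1)) *ᵥ w := by rw [hPA]
      _ = (A ^ k) *ᵥ v := hw
  -- C * B = X
  have hXC : (AEP ^ (m + 1) * (AEP ^ (k + 1))ᴴ * Aᴴ) * ((A ^ k)ᴴ * A ^ (m + 1) * Adag)
      = (AEP ^ (m + 1) * A ^ m) * A * Adag := by
    have e1 : Aᴴ * (A ^ k)ᴴ = (A ^ (k + 1))ᴴ := by
      rw [← conjTranspose_mul, ← pow_succ]
    have e2 : (A ^ (k + 1) * AEP ^ (k + 1))ᴴ = A * AEP := by
      rw [pow_succ' A k, mul_assoc, L2 k, h3]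
    calc (AEP ^ (m + 1) * (AEP ^ (k + 1))ᴴ * Aᴴ) * ((A ^ k)ᴴ * A ^ (m + 1) * Adag)
        = AEP ^ (m + 1) * ((AEP ^ (k + 1))ᴴ * (Aᴴ * (A ^ k)ᴴ)) * (A ^ (m + 1) * Adag) := by
          simp only [mul_assoc]
      _ = AEP ^ (m + 1) * (A ^ (k + 1) * AEP ^ (k + 1))ᴴ * (A ^ (m + 1) * Adag) := by
          rw [e1, ← conjTranspose_mul]
      _ = AEP ^ (m + 1) * (A * AEP) * (A ^ (m + 1) * Adag) := by rw [e2]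
      _ = AEP ^ m * (AEP * A * AEP) * (A ^ (m + 1) * Adag) := by
          rw [pow_succ AEP m]
          simp only [mul_assoc]
      _ = AEP ^ (m + 1) * (A ^ (m + 1) * Adag) := by
          rw [houter, ← pow_succ]
      _ = (AEP ^ (m + 1) * A ^ m) * A * Adag := by
          rw [pow_succ A m]
          simp only [mul_assoc]
  -- D * X = B
  have hBD : ((A ^ k)ᴴ * A ^ (m + 1)) * ((AEP ^ (m + 1) * A ^ m) * A * Adag)
      = (A ^ k)ᴴ * A ^ (m + 1) * Adag := by
    have e3 : A ^ (m + 1) * AEP ^ (m + 1) = A * AEP := by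
      rw [pow_succ' A m, mul_assoc, L2 m]
    have e4 : (A ^ k)ᴴ * (A * AEP) = (A ^ k)ᴴ := by
      rw [← h3, ← conjTranspose_mul, hP]
    calc ((A ^ k)ᴴ * A ^ (m + 1)) * ((AEP ^ (m + 1) * A ^ m) * A * Adag)
        = (A ^ k)ᴴ * (A ^ (m + 1) * AEP ^ (m + 1)) * (A ^ m * A * Adag) := by
          simp only [mul_assoc]
      _ = (A ^ k)ᴴ * (A * AEP) * (A ^ (m + 1) * Adag) := by
          rw [e3, ← pow_succ]
      _ = (A ^ k)ᴴ * A ^ (m + 1) * Adag := by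
          rw [e4]
          simp only [mul_assoc]
  constructor
  · apply le_antisymm
    · rw [hXfac]
      exact range_mul_le _ _
    · have h := range_mul_le ((AEP ^ (m + 1) * A ^ m) * A * Adag) (A ^ (k + 1))
      rw [hXA] at h
      exact h
  · apply le_antisymm
    · have h := ker_mul_ge ((A ^ k)ᴴ * A ^ (m + 1)) ((AEP ^ (m + 1) * A ^ m) * A * Adag)
      rw [hBD] at h
      exact h
    · have h := ker_mul_ge (AEP ^ (m + 1) * (AEP ^ (k + 1))ᴴ * Aᴴ)
        ((A ^ k)ᴴ * A ^ (m + 1) * Adag)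
      rw [hXC] at h
      exact h
end

section
/- Let A be an n×n complex matrix with k = Ind(A) and let m be a positive integer. Then A A^{w_m,†} is idempotent, with R(A A^{w_m,†}) = R(A^k) and N(A A^{w_m,†}) = N((A^k)^* A^{m+1} A^†); i.e., A A^{w_m,†} is the projector onto R(A^k) along N((A^k)^* A^{m+1} A^†). -/
open Matrix

section AuxCoreEP

variable {n : ℕ} (A X : Matrix (Fin n) (Fin n) ℂ)

/-- `A X^{j+2} = X^{j+1}`. -/
lemma coreEP_aux1 (h2 : A * X ^ 2 = X) : ∀ j, A * X ^ (j + 1 + 1) = X ^ (j + 1) := by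
  intro j
  induction j with
  | zero => simpa using h2
  | succ i ih =>
      have h : X ^ (i + 1 + 1 + 1) = X ^ (i + 1 + 1) * X := pow_succ X (i + 1 + 1)
      rw [h, ← mul_assoc, ih, ← pow_succ]

/-- `A^{j+1} X^{j+1} = A X`. -/
lemma coreEP_aux2 (h2 : A * X ^ 2 = X) : ∀ j, A ^ (j + 1) * X ^ (j + 1) = A * X := by
  intro j
  induction j with
  | zero => simp
  | succ i ih =>
      rw [pow_succ A (i + 1), mul_assoc, coreEP_aux1 A X h2 i]
      exact ih

/-- `X^{j+1} A^{k+j+1} = A^k`. -/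
lemma coreEP_aux3 (k : ℕ) (h1 : X * A ^ (k + 1) = A ^ k) :
    ∀ j, X ^ (j + 1) * A ^ (k + (j + 1)) = A ^ k := by
  intro j
  induction j with
  | zero => simpa using h1
  | succ i ih =>
      show X ^ (i + 1 + 1) * A ^ (k + (i + 1) + 1) = A ^ k
      calc X ^ (i + 1 + 1) * A ^ (k + (i + 1) + 1)
          = (X * X ^ (i + 1)) * (A ^ (k + (i + 1)) * A) := by
            rw [pow_succ' X (i + 1), pow_succ A (k + (i + 1))]
        _ = X * (X ^ (i + 1) * A ^ (k + (i + 1))) * A := by simp only [mul_assoc]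
        _ = X * A ^ k * A := by rw [ih]
        _ = X * A ^ (k + 1) := by rw [mul_assoc, ← pow_succ]
        _ = A ^ k := h1

/-- `A^i X^{i+j+1} = X^{j+1}`. -/
lemma coreEP_aux4 (h2 : A * X ^ 2 = X) :
    ∀ i j, A ^ i * X ^ (i + (j + 1)) = X ^ (j + 1) := by
  intro i
  induction i with
  | zero => intro j; simp
  | succ i ih =>
      intro j
      rw [show i + 1 + (j + 1) = i + j + 1 + 1 by omega]
      rw [pow_succ A i, mul_assoc, coreEP_aux1 A X h2 (i + j)]
      exact ih j

end AuxCoreEP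

lemma range_le_of_factor {n : ℕ} (M N C : Matrix (Fin n) (Fin n) ℂ) (h : M = N * C) :
    LinearMap.range M.mulVecLin ≤ LinearMap.range N.mulVecLin := by
  rintro y ⟨v, rfl⟩
  exact ⟨C.mulVec v, by simp [h, Matrix.mulVecLin_apply, Matrix.mulVec_mulVec]⟩

lemma ker_le_of_factor {n : ℕ} (M N D : Matrix (Fin n) (Fin n) ℂ) (h : N = D * M) :
    LinearMap.ker M.mulVecLin ≤ LinearMap.ker N.mulVecLin := by
  intro v hv
  simp only [LinearMap.mem_ker, Matrix.mulVecLin_apply] at *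
  rw [h, ← Matrix.mulVec_mulVec, hv, Matrix.mulVec_zero]

set_option maxHeartbeats 1000000 in
/-- `A A^{w_m,†}` is the projector onto `R(A^k)` along
`N((A^k)^* A^{m+1} A^†)`. -/
theorem m_WGMP_inverse_left_projector {n k m : ℕ}
    (A AEP Adag : Matrix (Fin n) (Fin n) ℂ)
    (hk : HasIndex A k) (hm : 0 < m)
    (hEP : IsCoreEP A k AEP)
    (hdag : IsMoorePenrose A Adag) :
    (A * ((AEP ^ (m + 1) * A ^ m) * A * Adag)) * (A * ((AEP ^ (m + 1) * A ^ m) * A * Adag))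
      = A * ((AEP ^ (m + 1) * A ^ m) * A * Adag) ∧
    LinearMap.range (A * ((AEP ^ (m + 1) * A ^ m) * A * Adag)).mulVecLin
      = LinearMap.range (A ^ k).mulVecLin ∧
    LinearMap.ker (A * ((AEP ^ (m + 1) * A ^ m) * A * Adag)).mulVecLin
      = LinearMap.ker ((A ^ k)ᴴ * A ^ (m + 1) * Adag).mulVecLin := by
  obtain ⟨mm, rfl⟩ : ∃ mm, m = mm + 1 := ⟨m - 1, (Nat.succ_pred_eq_of_pos hm).symm⟩
  obtain ⟨h1, h2, h3⟩ := hEP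
  obtain ⟨p1, -, -, -⟩ := hdag
  set X := AEP with hX
  -- basic consequences
  have p1assoc : ∀ Y : Matrix (Fin n) (Fin n) ℂ, A * (Adag * (A * Y)) = A * Y := by
    intro Y
    rw [← mul_assoc A Adag (A * Y), ← mul_assoc (A * Adag) A Y, p1]
  have hX1 : A ^ k * X ^ (k + 1) = X := by simpa using coreEP_aux4 A X h2 k 0
  have hXAX : X * A * X = X := by
    calc X * A * X = X * A * (A ^ k * X ^ (k + 1)) := by rw [hX1]
      _ = X * (A * A ^ k) * X ^ (k + 1) := by simp only [mul_assoc]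
      _ = X * A ^ (k + 1) * X ^ (k + 1) := by rw [← pow_succ']
      _ = A ^ k * X ^ (k + 1) := by rw [h1]
      _ = X := hX1
  have hAXAk : A * X * A ^ k = A ^ k := by
    calc A * X * A ^ k = A * X * (X * A ^ (k + 1)) := by rw [h1]
      _ = A * X ^ 2 * A ^ (k + 1) := by rw [sq]; simp only [mul_assoc]
      _ = X * A ^ (k + 1) := by rw [h2]
      _ = A ^ k := h1
  -- the main matrix, rewritten
  have hE : A * ((X ^ (mm + 1 + 1) * A ^ (mm + 1)) * A * Adag)
      = X ^ (mm + 1) * A ^ (mm + 1 + 1) * Adag := by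
    calc A * ((X ^ (mm + 1 + 1) * A ^ (mm + 1)) * A * Adag)
        = (A * X ^ (mm + 1 + 1)) * (A ^ (mm + 1) * A) * Adag := by simp only [mul_assoc]
      _ = X ^ (mm + 1) * A ^ (mm + 1 + 1) * Adag := by
          rw [coreEP_aux1 A X h2 mm, ← pow_succ]
  have e1 : A ^ (mm + 1 + 1) * Adag * X ^ (mm + 1) = A * X := by
    calc A ^ (mm + 1 + 1) * Adag * X ^ (mm + 1)
        = A ^ (mm + 1 + 1) * Adag * (A * X ^ (mm + 1 + 1)) := by rw [coreEP_aux1 A X h2 mm]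
      _ = A ^ (mm + 1) * (A * (Adag * (A * X ^ (mm + 1 + 1)))) := by
          rw [pow_succ A (mm + 1)]; simp only [mul_assoc]
      _ = A ^ (mm + 1) * (A * X ^ (mm + 1 + 1)) := by rw [p1assoc]
      _ = A ^ (mm + 1) * X ^ (mm + 1) := by rw [coreEP_aux1 A X h2 mm]
      _ = A * X := coreEP_aux2 A X h2 mm
  have e2 : X ^ (mm + 1) * (A * X) = X ^ (mm + 1) := by
    calc X ^ (mm + 1) * (A * X) = X ^ mm * (X * A * X) := by
          rw [pow_succ X mm]; simp only [mul_assoc]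
      _ = X ^ mm * X := by rw [hXAX]
      _ = X ^ (mm + 1) := (pow_succ X mm).symm
  have idem : (X ^ (mm + 1) * A ^ (mm + 1 + 1) * Adag) * (X ^ (mm + 1) * A ^ (mm + 1 + 1) * Adag)
      = X ^ (mm + 1) * A ^ (mm + 1 + 1) * Adag := by
    calc (X ^ (mm + 1) * A ^ (mm + 1 + 1) * Adag) * (X ^ (mm + 1) * A ^ (mm + 1 + 1) * Adag)
        = X ^ (mm + 1) * (A ^ (mm + 1 + 1) * Adag * X ^ (mm + 1)) * (A ^ (mm + 1 + 1) * Adag) := by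
          simp only [mul_assoc]
      _ = X ^ (mm + 1) * (A * X) * (A ^ (mm + 1 + 1) * Adag) := by rw [e1]
      _ = X ^ (mm + 1) * (A ^ (mm + 1 + 1) * Adag) := by rw [e2]
      _ = X ^ (mm + 1) * A ^ (mm + 1 + 1) * Adag := (mul_assoc _ _ _).symm
  have r1 : X ^ (mm + 1) * A ^ (mm + 1 + 1) * Adag
      = A ^ k * (X ^ (k + (mm + 1)) * (A ^ (mm + 1 + 1) * Adag)) := by
    have h4 := coreEP_aux4 A X h2 k mm
    rw [← h4]; simp only [mul_assoc]
  have r2 : (X ^ (mm + 1) * A ^ (mm + 1 + 1) * Adag) *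
      (A * (X ^ (mm + 1 + 1) * A ^ (k + (mm + 1)))) = A ^ k := by
    calc (X ^ (mm + 1) * A ^ (mm + 1 + 1) * Adag) *
        (A * (X ^ (mm + 1 + 1) * A ^ (k + (mm + 1))))
        = X ^ (mm + 1) * (A ^ (mm + 1) * (A * (Adag * (A * X ^ (mm + 1 + 1))))) *
            A ^ (k + (mm + 1)) := by
          rw [pow_succ A (mm + 1)]; simp only [mul_assoc]
      _ = X ^ (mm + 1) * (A ^ (mm + 1) * (A * X ^ (mm + 1 + 1))) * A ^ (k + (mm + 1)) := by
          rw [p1assoc]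
      _ = X ^ (mm + 1) * (A ^ (mm + 1 + 1) * X ^ (mm + 1 + 1)) * A ^ (k + (mm + 1)) := by
          rw [← mul_assoc (A ^ (mm + 1)) A (X ^ (mm + 1 + 1)), ← pow_succ]
      _ = X ^ (mm + 1) * (A * X) * A ^ (k + (mm + 1)) := by rw [coreEP_aux2 A X h2 (mm + 1)]
      _ = X ^ (mm + 1) * A ^ (k + (mm + 1)) := by rw [e2]
      _ = A ^ k := coreEP_aux3 A X k h1 mm
  have hAXh : A * X = (X ^ (k + 1))ᴴ * (Aᴴ * (A ^ k)ᴴ) := by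
    calc A * X = (A * X)ᴴ := h3.symm
      _ = (A ^ (k + 1) * X ^ (k + 1))ᴴ := by rw [coreEP_aux2 A X h2 k]
      _ = (X ^ (k + 1))ᴴ * (A ^ k * A)ᴴ := by rw [conjTranspose_mul, pow_succ A k]
      _ = (X ^ (k + 1))ᴴ * (Aᴴ * (A ^ k)ᴴ) := by rw [conjTranspose_mul]
  have k1 : X ^ (mm + 1) * ((X ^ (k + 1))ᴴ * Aᴴ) * ((A ^ k)ᴴ * A ^ (mm + 1 + 1) * Adag)
      = X ^ (mm + 1) * A ^ (mm + 1 + 1) * Adag := by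
    calc X ^ (mm + 1) * ((X ^ (k + 1))ᴴ * Aᴴ) * ((A ^ k)ᴴ * A ^ (mm + 1 + 1) * Adag)
        = X ^ (mm + 1) * ((X ^ (k + 1))ᴴ * (Aᴴ * (A ^ k)ᴴ)) * (A ^ (mm + 1 + 1) * Adag) := by
          simp only [mul_assoc]
      _ = X ^ (mm + 1) * (A * X) * (A ^ (mm + 1 + 1) * Adag) := by rw [← hAXh]
      _ = X ^ (mm + 1) * (A ^ (mm + 1 + 1) * Adag) := by rw [e2]
      _ = X ^ (mm + 1) * A ^ (mm + 1 + 1) * Adag := (mul_assoc _ _ _).symm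
  have hk2' : (A ^ k)ᴴ * (A * X) = (A ^ k)ᴴ := by
    have h5 : (A * X * A ^ k)ᴴ = (A ^ k)ᴴ := by rw [hAXAk]
    rw [conjTranspose_mul, h3] at h5
    exact h5
  have k2 : ((A ^ k)ᴴ * A ^ (mm + 1)) * (X ^ (mm + 1) * A ^ (mm + 1 + 1) * Adag)
      = (A ^ k)ᴴ * A ^ (mm + 1 + 1) * Adag := by
    calc ((A ^ k)ᴴ * A ^ (mm + 1)) * (X ^ (mm + 1) * A ^ (mm + 1 + 1) * Adag)
        = (A ^ k)ᴴ * (A ^ (mm + 1) * X ^ (mm + 1)) * (A ^ (mm + 1 + 1) * Adag) := by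
          simp only [mul_assoc]
      _ = (A ^ k)ᴴ * (A * X) * (A ^ (mm + 1 + 1) * Adag) := by rw [coreEP_aux2 A X h2 mm]
      _ = (A ^ k)ᴴ * (A ^ (mm + 1 + 1) * Adag) := by rw [hk2']
      _ = (A ^ k)ᴴ * A ^ (mm + 1 + 1) * Adag := (mul_assoc _ _ _).symm
  refine ⟨?_, ?_, ?_⟩
  · rw [hE]; exact idem
  · rw [hE]
    exact le_antisymm (range_le_of_factor _ _ _ r1) (range_le_of_factor _ _ _ r2.symm)
  · rw [hE]
    exact le_antisymm (ker_le_of_factor _ _ _ k2.symm) (ker_le_of_factor _ _ _ k1.symm)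
end
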